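/- arXiv:1012.2098 — 7 statements merged into one kernel-verified Lean document; each statement's English description precedes it below -/
import Mathlib

section
/- Sufficient reduction in multinomial inverse regression (Proposition 1, discrete form): Let Y be a finite type, V a finite subset of ℝ^K, and w : Y × V → ℝ_{≥0} a joint pmf (Σ_{y,v} w(y,v) = 1). Fix m ∈ ℕ, α ∈ ℝ^p, and Φ = [φ_1 ⋯ φ_p] with φ_j ∈ ℝ^K, and define the joint pmf P(y, x) = Σ_{v ∈ V} w(y,v) · MN(x; q(v), m) on Y × {x ∈ ℕ^p : Σ_j x_j = m}. Then for any two count vectors x, x′ ∈ ℕ^p with Σ_j x_j = Σ_j x′_j = m, Φᵀx = Φᵀx′, and positive marginals P(x) = Σ_y P(y,x) > 0 and P(x′) > 0, the conditional pmfs agree: P(y, x)/P(x) = P(y, x′)/P(x′) for every y ∈ Y. That is, y is conditionally independent of x given the sufficient reduction projection Φᵀx. -/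
open Real Finset

/-- The multinomial pmf: `MN(x; q, m) = (m! / ∏_j x_j!) ∏_j q_j^{x_j}`. -/
noncomputable def MN {p : ℕ} (q : Fin p → ℝ) (m : ℕ) (x : Fin p → ℕ) : ℝ :=
  (m.factorial : ℝ) / (∏ j, ((x j).factorial : ℝ)) * ∏ j, q j ^ x j

/-- The logistic-link multinomial probabilities `q_j(v)`. -/
noncomputable def qLogit {p K : ℕ} (α : Fin p → ℝ) (Φ : Fin p → Fin K → ℝ)
    (v : Fin K → ℝ) (j : Fin p) : ℝ :=
  Real.exp (α j + ∑ k, v k * Φ j k) / ∑ l, Real.exp (α l + ∑ k, v k * Φ l k)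

lemma MN_factor {p K m : ℕ} (α : Fin p → ℝ) (Φ : Fin p → Fin K → ℝ)
    (v : Fin K → ℝ) (x : Fin p → ℕ) (hx : ∑ j, x j = m) :
    MN (qLogit α Φ v) m x =
      ((m.factorial : ℝ) / (∏ j, ((x j).factorial : ℝ)) * Real.exp (∑ j, (x j : ℝ) * α j)) *
      (Real.exp (∑ k, v k * ∑ j, Φ j k * (x j : ℝ)) /
        (∑ l, Real.exp (α l + ∑ k, v k * Φ l k)) ^ m) := by
  rcases Nat.eq_zero_or_pos p with hp | hp
  · subst hp
    have hm : m = 0 := by simpa using hx.symm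
    subst hm
    simp [MN]
  · have hS : (0 : ℝ) < ∑ l, Real.exp (α l + ∑ k, v k * Φ l k) :=
      Finset.sum_pos (fun l _ => Real.exp_pos _)
        (Finset.univ_nonempty_iff.mpr (Fin.pos_iff_nonempty.mp hp))
    have hprod : ∏ j, qLogit α Φ v j ^ x j =
        Real.exp (∑ j, (x j : ℝ) * (α j + ∑ k, v k * Φ j k)) /
          (∑ l, Real.exp (α l + ∑ k, v k * Φ l k)) ^ m := by
      simp only [qLogit, div_pow, Finset.prod_div_distrib]
      rw [Finset.prod_pow_eq_pow_sum, hx]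
      congr 1
      rw [Real.exp_sum]
      refine Finset.prod_congr rfl fun j _ => ?_
      rw [← Real.exp_nat_mul]
    have hsum : ∑ j, (x j : ℝ) * (α j + ∑ k, v k * Φ j k) =
        (∑ j, (x j : ℝ) * α j) + ∑ k, v k * ∑ j, Φ j k * (x j : ℝ) := by
      simp only [mul_add, Finset.sum_add_distrib, Finset.mul_sum]
      congr 1
      rw [Finset.sum_comm]
      refine Finset.sum_congr rfl fun k _ => Finset.sum_congr rfl fun j _ => ?_
      ring
    rw [MN, hprod, hsum, Real.exp_add]
    ring

/-- Sufficient reduction in multinomial inverse regression (Proposition 1, discrete form):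
`y` is conditionally independent of the counts `x` given the projection `Φᵀx`. -/
theorem mnir_sufficient_reduction
    (p K m : ℕ) (Y : Type*) [Fintype Y]
    (V : Finset (Fin K → ℝ)) (w : Y → (Fin K → ℝ) → ℝ)
    (hw0 : ∀ y, ∀ v ∈ V, 0 ≤ w y v)
    (hw1 : ∑ y : Y, ∑ v ∈ V, w y v = 1)
    (α : Fin p → ℝ) (Φ : Fin p → Fin K → ℝ)
    (P : Y → (Fin p → ℕ) → ℝ)
    (hP : ∀ y x, P y x = ∑ v ∈ V, w y v * MN (qLogit α Φ v) m x)
    (x x' : Fin p → ℕ)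
    (hx : ∑ j, x j = m) (hx' : ∑ j, x' j = m)
    (hproj : ∀ k, ∑ j, Φ j k * (x j : ℝ) = ∑ j, Φ j k * (x' j : ℝ))
    (hPx : 0 < ∑ y : Y, P y x) (hPx' : 0 < ∑ y : Y, P y x') :
    ∀ y : Y, P y x / (∑ y' : Y, P y' x) = P y x' / (∑ y' : Y, P y' x') := by
  set C : (Fin p → ℕ) → ℝ := fun z =>
    (m.factorial : ℝ) / (∏ j, ((z j).factorial : ℝ)) * Real.exp (∑ j, (z j : ℝ) * α j) with hC
  set G : Y → ℝ := fun y => ∑ v ∈ V, w y v *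
      (Real.exp (∑ k, v k * ∑ j, Φ j k * (x j : ℝ)) /
        (∑ l, Real.exp (α l + ∑ k, v k * Φ l k)) ^ m) with hG
  have hCpos : ∀ z : Fin p → ℕ, 0 < C z := by
    intro z
    have h1 : (0:ℝ) < (m.factorial : ℝ) := by positivity
    have h2 : (0:ℝ) < ∏ j, ((z j).factorial : ℝ) :=
      Finset.prod_pos fun j _ => by positivity
    positivity
  have hkey : ∀ y, P y x = C x * G y := by
    intro y
    rw [hP, hG, Finset.mul_sum]
    refine Finset.sum_congr rfl fun v hv => ?_
    rw [MN_factor α Φ v x hx]; ring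
  have hkey' : ∀ y, P y x' = C x' * G y := by
    intro y
    rw [hP, hG, Finset.mul_sum]
    refine Finset.sum_congr rfl fun v hv => ?_
    rw [MN_factor α Φ v x' hx']
    simp only [← hproj]
    ring
  have hsum : ∑ y' : Y, P y' x = C x * ∑ y' : Y, G y' := by
    rw [Finset.mul_sum]; exact Finset.sum_congr rfl fun y _ => hkey y
  have hsum' : ∑ y' : Y, P y' x' = C x' * ∑ y' : Y, G y' := by
    rw [Finset.mul_sum]; exact Finset.sum_congr rfl fun y _ => hkey' y
  intro y
  rw [hkey, hkey', hsum, hsum',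
    mul_div_mul_left _ _ (ne_of_gt (hCpos x)),
    mul_div_mul_left _ _ (ne_of_gt (hCpos x'))]
end

section
/- Sufficiency survives the frequency transformation (Proposition 2, discrete form): Let Y be a countable type and P a joint pmf on Y × ℕ^p such that the marginal P(x) = Σ_y P(y,x) is strictly positive for every x ∈ ℕ^p with m(x) := Σ_j x_j ≥ 1. Fix Φ ∈ ℝ^{p×K} and write f(x) = x/m(x) ∈ ℝ^p and P(y|x) = P(y,x)/P(x). Assume: (i) whenever m(x) = m(x′) and Φᵀx = Φᵀx′ (both with m ≥ 1), P(y|x) = P(y|x′) for all y; and (ii) whenever f(x) = f(x′) (both with m ≥ 1), P(y|x) = P(y|x′) for all y. Then whenever Φᵀf(x) = Φᵀf(x′) (both with m ≥ 1), P(y|x) = P(y|x′) for all y ∈ Y; that is, y is conditionally independent of x given z = Φᵀf(x). -/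
open Finset

/-! Scaling a count vector by a positive integer does not change its frequencies. Given
`Φᵀf(x) = Φᵀf(x')`, the vectors `m(x') • x` and `m(x) • x'` have the same total `m(x) m(x')` and
the same image `m(x) m(x') Φᵀf(x) = m(x) m(x') Φᵀf(x')` under `Φᵀ`, so (i) links them, while (ii)
links each of them to the vector it was scaled from. -/

namespace CountVector

variable {ι : Type*} [Fintype ι]

/-- `x / m(x)`, which is `0` when `m(x) = 0`. -/
noncomputable def freq (x : ι → ℕ) : ι → ℝ := fun j => (x j : ℝ) / ((∑ j', x j' : ℕ) : ℝ)

lemma sum_nsmul (c : ℕ) (x : ι → ℕ) : ∑ j, (c • x) j = c * ∑ j, x j := by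
  simp only [Pi.smul_apply, smul_eq_mul, mul_sum]

lemma freq_nsmul {c : ℕ} (hc : c ≠ 0) (x : ι → ℕ) : freq (c • x) = freq x := by
  ext j
  simp only [freq, sum_nsmul]
  simp only [Pi.smul_apply, smul_eq_mul, Nat.cast_mul]
  exact mul_div_mul_left _ _ (Nat.cast_ne_zero.mpr hc : (c : ℝ) ≠ 0)

lemma sum_mul_nsmul_eq_mul_sum_mul_freq (w : ι → ℝ) (c : ℕ) {x : ι → ℕ} (hx : ∑ j, x j ≠ 0) :
    ∑ j, w j * ((c • x) j : ℝ) = c * (∑ j, x j : ℕ) * ∑ j, w j * freq x j := by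
  have hm : ((∑ j, x j : ℕ) : ℝ) ≠ 0 := Nat.cast_ne_zero.mpr hx
  rw [mul_sum]
  refine sum_congr rfl fun j _ => ?_
  simp only [freq, Pi.smul_apply, smul_eq_mul, Nat.cast_mul]
  field_simp

theorem eq_of_sum_mul_freq_eq {κ β : Type*} (Φ : ι → κ → ℝ) (g : (ι → ℕ) → β)
    (hi : ∀ x x' : ι → ℕ, 1 ≤ ∑ j, x j → 1 ≤ ∑ j, x' j → ∑ j, x j = ∑ j, x' j →
      (∀ k, ∑ j, Φ j k * (x j : ℝ) = ∑ j, Φ j k * (x' j : ℝ)) → g x = g x')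
    (hii : ∀ x x' : ι → ℕ, 1 ≤ ∑ j, x j → 1 ≤ ∑ j, x' j → (∀ j, freq x j = freq x' j) →
      g x = g x')
    {x x' : ι → ℕ} (hx : 1 ≤ ∑ j, x j) (hx' : 1 ≤ ∑ j, x' j)
    (hΦ : ∀ k, ∑ j, Φ j k * freq x j = ∑ j, Φ j k * freq x' j) :
    g x = g x' := by
  set m := ∑ j, x j
  set m' := ∑ j, x' j
  have hm : m ≠ 0 := Nat.one_le_iff_ne_zero.mp hx
  have hm' : m' ≠ 0 := Nat.one_le_iff_ne_zero.mp hx'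
  have hsum : ∑ j, (m' • x) j = m * m' := by rw [sum_nsmul, mul_comm]
  have hsum' : ∑ j, (m • x') j = m * m' := sum_nsmul m x'
  have hmm : 1 ≤ m * m' := Nat.one_le_iff_ne_zero.mpr (mul_ne_zero hm hm')
  have hscaled : g (m' • x) = g (m • x') := by
    refine hi _ _ (hsum ▸ hmm) (hsum' ▸ hmm) (hsum.trans hsum'.symm) fun k => ?_
    rw [sum_mul_nsmul_eq_mul_sum_mul_freq _ _ hm, sum_mul_nsmul_eq_mul_sum_mul_freq _ _ hm', hΦ k]
    ring
  calc g x = g (m' • x) := hii _ _ hx (hsum ▸ hmm) fun j => by rw [freq_nsmul hm']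
    _ = g (m • x') := hscaled
    _ = g x' := hii _ _ (hsum' ▸ hmm) hx' fun j => by rw [freq_nsmul hm]

end CountVector

theorem sufficiency_survives_frequency_transformation_general
    (p K : ℕ) (Y : Type*)
    (P : Y → (Fin p → ℕ) → ℝ)
    (Φ : Fin p → Fin K → ℝ)
    -- (i) conditional independence given (Φᵀx, m(x))
    (hi : ∀ x x' : Fin p → ℕ, 1 ≤ ∑ j, x j → 1 ≤ ∑ j, x' j →
      ∑ j, x j = ∑ j, x' j →
      (∀ k, ∑ j, Φ j k * (x j : ℝ) = ∑ j, Φ j k * (x' j : ℝ)) →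
      ∀ y : Y, P y x / (∑' y' : Y, P y' x) = P y x' / (∑' y' : Y, P y' x'))
    -- (ii) conditional independence given the frequencies f(x) = x / m(x)
    (hii : ∀ x x' : Fin p → ℕ, 1 ≤ ∑ j, x j → 1 ≤ ∑ j, x' j →
      (∀ j, (x j : ℝ) / ((∑ j', x j' : ℕ) : ℝ) = (x' j : ℝ) / ((∑ j', x' j' : ℕ) : ℝ)) →
      ∀ y : Y, P y x / (∑' y' : Y, P y' x) = P y x' / (∑' y' : Y, P y' x')) :
    -- conclusion: conditional independence given z = Φᵀ f(x)
    ∀ x x' : Fin p → ℕ, 1 ≤ ∑ j, x j → 1 ≤ ∑ j, x' j →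
      (∀ k, ∑ j, Φ j k * ((x j : ℝ) / ((∑ j', x j' : ℕ) : ℝ))
          = ∑ j, Φ j k * ((x' j : ℝ) / ((∑ j', x' j' : ℕ) : ℝ))) →
      ∀ y : Y, P y x / (∑' y' : Y, P y' x) = P y x' / (∑' y' : Y, P y' x') := by
  intro x x' hx hx' hΦ
  have hcond := CountVector.eq_of_sum_mul_freq_eq Φ
    (fun x (y : Y) => P y x / ∑' y', P y' x)
    (fun x x' hx hx' hm hΦ => funext (hi x x' hx hx' hm hΦ))
    (fun x x' hx hx' hf => funext (hii x x' hx hx' hf)) hx hx' hΦ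
  exact congrFun hcond

/-- Sufficiency survives the frequency transformation (Proposition 2, discrete form):
if `y ⊥ x | (Φᵀx, m)` and `y ⊥ x | f(x) = x/m(x)`, then `y ⊥ x | z = Φᵀf(x)`. -/
theorem sufficiency_survives_frequency_transformation
    (p K : ℕ) (Y : Type*) [Countable Y]
    (P : Y → (Fin p → ℕ) → ℝ)
    (hP0 : ∀ y x, 0 ≤ P y x)
    (hP1 : HasSum (fun yx : Y × (Fin p → ℕ) => P yx.1 yx.2) 1)
    (hPm : ∀ x : Fin p → ℕ, 1 ≤ ∑ j, x j → 0 < ∑' y : Y, P y x)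
    (Φ : Fin p → Fin K → ℝ)
    -- (i) conditional independence given (Φᵀx, m(x))
    (hi : ∀ x x' : Fin p → ℕ, 1 ≤ ∑ j, x j → 1 ≤ ∑ j, x' j →
      ∑ j, x j = ∑ j, x' j →
      (∀ k, ∑ j, Φ j k * (x j : ℝ) = ∑ j, Φ j k * (x' j : ℝ)) →
      ∀ y : Y, P y x / (∑' y' : Y, P y' x) = P y x' / (∑' y' : Y, P y' x'))
    -- (ii) conditional independence given the frequencies f(x) = x / m(x)
    (hii : ∀ x x' : Fin p → ℕ, 1 ≤ ∑ j, x j → 1 ≤ ∑ j, x' j →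
      (∀ j, (x j : ℝ) / ((∑ j', x j' : ℕ) : ℝ) = (x' j : ℝ) / ((∑ j', x' j' : ℕ) : ℝ)) →
      ∀ y : Y, P y x / (∑' y' : Y, P y' x) = P y x' / (∑' y' : Y, P y' x')) :
    -- conclusion: conditional independence given z = Φᵀ f(x)
    ∀ x x' : Fin p → ℕ, 1 ≤ ∑ j, x j → 1 ≤ ∑ j, x' j →
      (∀ k, ∑ j, Φ j k * ((x j : ℝ) / ((∑ j', x j' : ℕ) : ℝ))
          = ∑ j, Φ j k * ((x' j : ℝ) / ((∑ j', x' j' : ℕ) : ℝ))) →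
      ∀ y : Y, P y x / (∑' y' : Y, P y' x) = P y x' / (∑' y' : Y, P y' x') :=
  sufficiency_survives_frequency_transformation_general p K Y P Φ hi hii
end

section
/- Gamma-lasso penalized regression (Proposition 3): Let N ≥ 1, s, r > 0, and let L : ℝ^N → ℝ be any function (e.g., a negative log likelihood). Define F(φ, λ) = L(φ) + Σ_{j=1}^N (−s·log λ_j + (r + |φ_j|)λ_j) for φ ∈ ℝ^N and λ ∈ (0,∞)^N, and the profiled objective F̃(φ) = L(φ) + Σ_{j=1}^N s·log(1 + |φ_j|/r). Then a pair (φ̂, λ̂) is a global minimizer of F over ℝ^N × (0,∞)^N if and only if φ̂ is a global minimizer of F̃ over ℝ^N and λ̂_j = s/(r + |φ̂_j|) for every j. MAP estimation under independent gamma-Laplace priors is thus equivalent to minimizing the negative log likelihood subject to the costs c(φ_j) = s·log(1 + |φ_j|/r). -/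
open Real Finset

/-- Joint negative log posterior (up to constants) under independent gamma-Laplace
priors: negative log likelihood plus `∑_j (−s log λ_j + (r + |φ_j|) λ_j)`. -/
noncomputable def jointObjective (N : ℕ) (s r : ℝ) (L : (Fin N → ℝ) → ℝ)
    (φ lam : Fin N → ℝ) : ℝ :=
  L φ + ∑ j, (-(s * Real.log (lam j)) + (r + |φ j|) * lam j)

/-- Profiled (gamma-lasso) objective: negative log likelihood plus the gamma-lasso
penalties `c(φ_j) = s log(1 + |φ_j|/r)`. -/
noncomputable def profiledObjective (N : ℕ) (s r : ℝ) (L : (Fin N → ℝ) → ℝ)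
    (φ : Fin N → ℝ) : ℝ :=
  L φ + ∑ j, s * Real.log (1 + |φ j| / r)

/-!
For fixed `φ`, the joint objective separates into the one-dimensional problems
`λ ↦ -s log λ + a λ` with `a = r + |φ_j| > 0`, and `log x < x - 1` for `x ≠ 1` shows that each
has the unique minimizer `λ = s / a`. Substituting it back gives the profiled objective plus the
constant `N (s log (r / s) + s)`, so minimizing jointly is minimizing the profiled objective
and then taking the optimal penalties.
-/

theorem neg_mul_log_add_mul_lt {s a l : ℝ} (hs : 0 < s) (ha : 0 < a) (hl : 0 < l)
    (hne : l ≠ s / a) :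
    -(s * log (s / a)) + a * (s / a) < -(s * log l) + a * l := by
  have hsa : 0 < s / a := by positivity
  have hlog := log_lt_sub_one_of_pos (div_pos hl hsa) (by rwa [Ne, div_eq_one_iff_eq hsa.ne'])
  rw [log_div hl.ne' hsa.ne'] at hlog
  have hscale : s * (l / (s / a) - 1) = a * l - s := by field_simp
  have := mul_lt_mul_of_pos_left hlog hs
  rw [mul_div_cancel₀ _ ha.ne']
  linarith

theorem neg_mul_log_add_mul_le {s a l : ℝ} (hs : 0 < s) (ha : 0 < a) (hl : 0 < l) :
    -(s * log (s / a)) + a * (s / a) ≤ -(s * log l) + a * l := by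
  rcases eq_or_ne l (s / a) with rfl | hne
  · rfl
  · exact (neg_mul_log_add_mul_lt hs ha hl hne).le

noncomputable def optimalPenalty {N : ℕ} (s r : ℝ) (φ : Fin N → ℝ) : Fin N → ℝ :=
  fun j => s / (r + |φ j|)

section

variable {N : ℕ} {s r : ℝ} (L : (Fin N → ℝ) → ℝ) (φ : Fin N → ℝ)

theorem optimalPenalty_pos (hs : 0 < s) (hr : 0 < r) (j : Fin N) : 0 < optimalPenalty s r φ j :=
  div_pos hs (by positivity)

theorem jointObjective_optimalPenalty (hs : 0 < s) (hr : 0 < r) :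
    jointObjective N s r L φ (optimalPenalty s r φ) =
      profiledObjective N s r L φ + N * (s * log (r / s) + s) := by
  have hterm : ∀ j, -(s * log (optimalPenalty s r φ j)) + (r + |φ j|) * optimalPenalty s r φ j =
      s * log (1 + |φ j| / r) + (s * log (r / s) + s) := fun j => by
    have ha : 0 < r + |φ j| := by positivity
    rw [optimalPenalty, mul_div_cancel₀ _ ha.ne', log_div hs.ne' ha.ne', log_div hr.ne' hs.ne',
      one_add_div hr.ne', log_div ha.ne' hr.ne']
    ring
  simp only [jointObjective, profiledObjective, hterm, sum_add_distrib, sum_const, card_univ,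
    Fintype.card_fin, nsmul_eq_mul]
  ring

variable {lam : Fin N → ℝ}

theorem jointObjective_optimalPenalty_le (hs : 0 < s) (hr : 0 < r) (hlam : ∀ j, 0 < lam j) :
    jointObjective N s r L φ (optimalPenalty s r φ) ≤ jointObjective N s r L φ lam :=
  add_le_add_right (sum_le_sum fun j _ => neg_mul_log_add_mul_le hs (by positivity) (hlam j)) _

theorem jointObjective_optimalPenalty_lt (hs : 0 < s) (hr : 0 < r) (hlam : ∀ j, 0 < lam j)
    (hne : lam ≠ optimalPenalty s r φ) :
    jointObjective N s r L φ (optimalPenalty s r φ) < jointObjective N s r L φ lam := by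
  obtain ⟨j, hj⟩ := Function.ne_iff.mp hne
  refine add_lt_add_right (sum_lt_sum (fun i _ => ?_) ⟨j, mem_univ j, ?_⟩) _
  · exact neg_mul_log_add_mul_le hs (by positivity) (hlam i)
  · exact neg_mul_log_add_mul_lt hs (by positivity) (hlam j) hj

end

theorem gammaLasso_map_equivalence_general
    (N : ℕ) (s r : ℝ) (hs : 0 < s) (hr : 0 < r)
    (L : (Fin N → ℝ) → ℝ)
    (φhat lamhat : Fin N → ℝ) (hlam : ∀ j, 0 < lamhat j) :
    (∀ (φ lam : Fin N → ℝ), (∀ j, 0 < lam j) →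
        jointObjective N s r L φhat lamhat ≤ jointObjective N s r L φ lam)
      ↔ ((∀ φ : Fin N → ℝ, profiledObjective N s r L φhat ≤ profiledObjective N s r L φ)
          ∧ ∀ j, lamhat j = s / (r + |φhat j|)) := by
  rw [show (∀ j, lamhat j = s / (r + |φhat j|)) ↔ lamhat = optimalPenalty s r φhat from
    funext_iff.symm]
  have hvalue := (jointObjective_optimalPenalty L · hs hr)
  constructor
  · intro hmin
    have hopt : lamhat = optimalPenalty s r φhat := by
      by_contra hne
      exact (jointObjective_optimalPenalty_lt L φhat hs hr hlam hne).not_ge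
        (hmin _ _ (optimalPenalty_pos φhat hs hr))
    refine ⟨fun φ => ?_, hopt⟩
    have := hmin φ _ (optimalPenalty_pos φ hs hr)
    rw [hopt, hvalue, hvalue] at this
    linarith
  · rintro ⟨hmin, rfl⟩ φ lam hlam'
    calc jointObjective N s r L φhat (optimalPenalty s r φhat)
        = profiledObjective N s r L φhat + N * (s * log (r / s) + s) := hvalue φhat
      _ ≤ profiledObjective N s r L φ + N * (s * log (r / s) + s) := by gcongr; exact hmin φ
      _ = jointObjective N s r L φ (optimalPenalty s r φ) := (hvalue φ).symm
      _ ≤ jointObjective N s r L φ lam := jointObjective_optimalPenalty_le L φ hs hr hlam'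

/-- Gamma-lasso penalized regression (Proposition 3): `(φ̂, λ̂)` globally minimizes the
joint objective over `ℝ^N × (0,∞)^N` iff `φ̂` globally minimizes the profiled
gamma-lasso objective and `λ̂_j = s/(r + |φ̂_j|)` for every `j`. -/
theorem gammaLasso_map_equivalence
    (N : ℕ) (hN : 1 ≤ N) (s r : ℝ) (hs : 0 < s) (hr : 0 < r)
    (L : (Fin N → ℝ) → ℝ)
    (φhat lamhat : Fin N → ℝ) (hlam : ∀ j, 0 < lamhat j) :
    (∀ (φ lam : Fin N → ℝ), (∀ j, 0 < lam j) →
        jointObjective N s r L φhat lamhat ≤ jointObjective N s r L φ lam)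
      ↔ ((∀ φ : Fin N → ℝ, profiledObjective N s r L φhat ≤ profiledObjective N s r L φ)
          ∧ ∀ j, lamhat j = s / (r + |φhat j|)) :=
  gammaLasso_map_equivalence_general N s r hs hr L φhat lamhat hlam
end

section
/- Trust-region curvature bound for the logistic multinomial (Appendix A.2): let a ∈ ℝ, E > 0, d ≥ 0, and for x ∈ ℝ define q(x) = e^{a+x}/(e^{a+x} + E). Then: (i) for every x, 1/(q(x)(1 − q(x))) = 2 + e^{a+x}/E + E/e^{a+x}; and (ii) setting e* = e^{a−d} if E < e^{a−d}, e* = e^{a+d} if E > e^{a+d}, and e* = E otherwise, and F = 2 + e*/E + E/e*, one has q(x)(1 − q(x)) ≤ 1/F for every x with |x| ≤ d, and F is the largest constant with this property (it is the minimum of 2 + e^{a+x}/E + E/e^{a+x} over |x| ≤ d). -/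
open Real

/-- Fitted probability `q(x) = e^{a+x} / (e^{a+x} + E)`. -/
noncomputable def qTrust (a E x : ℝ) : ℝ :=
  Real.exp (a + x) / (Real.exp (a + x) + E)

/-- The bounding point `e*` of Appendix A.2. -/
noncomputable def eStar (a E d : ℝ) : ℝ :=
  if E < Real.exp (a - d) then Real.exp (a - d)
  else if Real.exp (a + d) < E then Real.exp (a + d)
  else E

/-- The least curvature-bound constant `F = 2 + e*/E + E/e*`. -/
noncomputable def Fbound (a E d : ℝ) : ℝ :=
  2 + eStar a E d / E + E / eStar a E d

/-!
With `t = e^{a+x}` one has `1/(q(1-q)) = 2 + t/E + E/t`, and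
`(t/E + E/t) - (u/E + E/u) = (t - u)(tu - E²)/(Etu)`, so `t ↦ t/E + E/t` decreases on `(0, E]`
and increases on `[E, ∞)`. Its minimum over `[e^{a-d}, e^{a+d}]` is therefore attained at the
point `e*` nearest to `E`, and this minimum `F` bounds the curvature `q(1-q)` by `1/F`.
-/

theorem one_div_qTrust_mul_one_sub (a E x : ℝ) (hE : 0 < E) :
    1 / (qTrust a E x * (1 - qTrust a E x))
      = 2 + Real.exp (a + x) / E + E / Real.exp (a + x) := by
  have hsum : Real.exp (a + x) + E ≠ 0 := by positivity
  have hq : qTrust a E x * (1 - qTrust a E x)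
      = Real.exp (a + x) * E / (Real.exp (a + x) + E) ^ 2 := by
    rw [qTrust]
    field_simp
    ring
  rw [hq, one_div_div]
  field_simp
  ring

theorem div_add_div_le_div_add_div {E t u : ℝ} (hE : 0 < E) (ht : 0 < t) (hu : 0 < u)
    (h : 0 ≤ (t - u) * (t * u - E ^ 2)) :
    u / E + E / u ≤ t / E + E / t := by
  have hdiff : (t / E + E / t) - (u / E + E / u) = (t - u) * (t * u - E ^ 2) / (E * t * u) := by
    field_simp
    ring
  have : 0 ≤ (t - u) * (t * u - E ^ 2) / (E * t * u) := by positivity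
  linarith

theorem eStar_pos (a E d : ℝ) (hE : 0 < E) : 0 < eStar a E d := by
  unfold eStar
  split_ifs <;> positivity

theorem sub_eStar_mul_sub_sq_nonneg {a E d t : ℝ} (hE : 0 < E)
    (hlo : Real.exp (a - d) ≤ t) (hhi : t ≤ Real.exp (a + d)) :
    0 ≤ (t - eStar a E d) * (t * eStar a E d - E ^ 2) := by
  unfold eStar
  split_ifs with hbelow habove
  · have hsq : E ^ 2 < t * Real.exp (a - d) := by nlinarith
    exact mul_nonneg (by linarith) (by linarith)
  · have hsq : t * Real.exp (a + d) < E ^ 2 := by nlinarith [Real.exp_pos (a - d)]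
    exact mul_nonneg_of_nonpos_of_nonpos (by linarith) (by linarith)
  · have hsq : (t - E) * (t * E - E ^ 2) = E * (t - E) ^ 2 := by ring
    rw [hsq]
    positivity

theorem Fbound_le {a E d x : ℝ} (hE : 0 < E) (hx : |x| ≤ d) :
    Fbound a E d ≤ 2 + Real.exp (a + x) / E + E / Real.exp (a + x) := by
  obtain ⟨hxlo, hxhi⟩ := abs_le.mp hx
  have hlo : Real.exp (a - d) ≤ Real.exp (a + x) := Real.exp_le_exp.mpr (by linarith)
  have hhi : Real.exp (a + x) ≤ Real.exp (a + d) := Real.exp_le_exp.mpr (by linarith)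
  have := div_add_div_le_div_add_div hE (Real.exp_pos _) (eStar_pos a E d hE)
    (sub_eStar_mul_sub_sq_nonneg hE hlo hhi)
  rw [Fbound]
  linarith

theorem exists_abs_le_exp_eq_eStar (a E d : ℝ) (hE : 0 < E) (hd : 0 ≤ d) :
    ∃ x, |x| ≤ d ∧ Real.exp (a + x) = eStar a E d := by
  unfold eStar
  split_ifs with hbelow habove
  · exact ⟨-d, by rw [abs_neg, abs_of_nonneg hd], by rw [← sub_eq_add_neg]⟩
  · exact ⟨d, (abs_of_nonneg hd).le, rfl⟩
  · rw [not_lt] at hbelow habove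
    refine ⟨Real.log E - a, abs_le.mpr ⟨?_, ?_⟩, by rw [add_sub_cancel, Real.exp_log hE]⟩
    · linarith [(Real.le_log_iff_exp_le hE).mpr hbelow]
    · linarith [(Real.log_le_iff_le_exp hE).mpr habove]

/-- Trust-region curvature bound for the logistic multinomial (Appendix A.2):
(i) `1/(q(1−q)) = 2 + e^{a+x}/E + E/e^{a+x}`; (ii) `q(x)(1−q(x)) ≤ 1/F` for all
`|x| ≤ d`, and `F` is the minimum of `2 + e^{a+x}/E + E/e^{a+x}` over `|x| ≤ d`,
hence the largest constant with this property. -/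
theorem logistic_trust_region_bound
    (a E d : ℝ) (hE : 0 < E) (hd : 0 ≤ d) :
    (∀ x : ℝ, 1 / (qTrust a E x * (1 - qTrust a E x))
        = 2 + Real.exp (a + x) / E + E / Real.exp (a + x)) ∧
    (∀ x : ℝ, |x| ≤ d → qTrust a E x * (1 - qTrust a E x) ≤ 1 / Fbound a E d) ∧
    IsLeast {y : ℝ | ∃ x : ℝ, |x| ≤ d ∧
        y = 2 + Real.exp (a + x) / E + E / Real.exp (a + x)} (Fbound a E d) := by
  have hF : 0 < Fbound a E d := by
    have := eStar_pos a E d hE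
    unfold Fbound
    positivity
  refine ⟨fun x ↦ one_div_qTrust_mul_one_sub a E x hE, fun x hx ↦ ?_, ?_, ?_⟩
  · have hle := Fbound_le (a := a) hE hx
    rw [← one_div_qTrust_mul_one_sub a E x hE] at hle
    simpa only [one_div_one_div] using one_div_le_one_div_of_le hF hle
  · obtain ⟨x, hx, hex⟩ := exists_abs_le_exp_eq_eStar a E d hE hd
    exact ⟨x, hx, by rw [hex, Fbound]⟩
  · rintro y ⟨x, hx, rfl⟩
    exact Fbound_le hE hx
end

section
/- Uniqueness of the minimizing root in the gamma-lasso coordinate update: let s, r, H > 0 and g, φ ∈ ℝ, and define B(t) = g(t − φ) + (H/2)(t − φ)² + s·log(1 + t/r) for t > 0. Then there exists at most one t > 0 satisfying both B′(t) = 0 and B″(t) > 0, where B″(t) = H − s/(r + t)²; that is, B has at most one strict local minimizer on (0, ∞). -/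
open Real

/-- Uniqueness of the minimizing root in the gamma-lasso coordinate update: the bound
objective `B(t) = g(t−φ) + (H/2)(t−φ)² + s log(1 + t/r)`, with
`B′(t) = g + H(t−φ) + s/(r+t)` and `B″(t) = H − s/(r+t)²`, has at most one strict
local minimizer on `(0, ∞)`, i.e., at most one `t > 0` with `B′(t) = 0` and
`B″(t) > 0`. -/
theorem gammaLasso_update_unique_minimizing_root
    (s r H : ℝ) (hs : 0 < s) (hr : 0 < r) (hH : 0 < H) (g φ : ℝ) :
    ∀ t₁ t₂ : ℝ, 0 < t₁ → 0 < t₂ →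
      (g + H * (t₁ - φ) + s / (r + t₁) = 0 ∧ 0 < H - s / (r + t₁) ^ 2) →
      (g + H * (t₂ - φ) + s / (r + t₂) = 0 ∧ 0 < H - s / (r + t₂) ^ 2) →
      t₁ = t₂ := by
  intro t₁ t₂ ht₁ ht₂ ⟨h1, h1'⟩ ⟨h2, h2'⟩
  have ha : (0:ℝ) < r + t₁ := by linarith
  have hb : (0:ℝ) < r + t₂ := by linarith
  -- clear denominators
  have e1 : (g + H * (t₁ - φ)) * (r + t₁) + s = 0 := by
    have := h1
    field_simp at this
    linarith [this]
  have e2 : (g + H * (t₂ - φ)) * (r + t₂) + s = 0 := by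
    have := h2
    field_simp at this
    linarith [this]
  have c1 : s < H * (r + t₁) ^ 2 := by
    have hne : (0:ℝ) < (r + t₁) ^ 2 := by positivity
    have : s / (r + t₁) ^ 2 < H := by linarith
    calc s = s / (r + t₁) ^ 2 * (r + t₁) ^ 2 := by field_simp
    _ < H * (r + t₁) ^ 2 := by exact mul_lt_mul_of_pos_right this hne
  have c2 : s < H * (r + t₂) ^ 2 := by
    have hne : (0:ℝ) < (r + t₂) ^ 2 := by positivity
    have : s / (r + t₂) ^ 2 < H := by linarith
    calc s = s / (r + t₂) ^ 2 * (r + t₂) ^ 2 := by field_simp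
    _ < H * (r + t₂) ^ 2 := by exact mul_lt_mul_of_pos_right this hne
  by_contra hne
  -- subtracting first-order conditions
  have key : (t₁ - t₂) * (H * (r + t₁) * (r + t₂) - s) = 0 := by
    have d1 : s / (r + t₁) = -(g + H * (t₁ - φ)) := by
      field_simp at h1 ⊢; linarith
    nlinarith [h1, h2, mul_pos ha hb]
  have hts : t₁ - t₂ ≠ 0 := sub_ne_zero.mpr hne
  have hk : H * (r + t₁) * (r + t₂) - s = 0 := by
    rcases mul_eq_zero.mp key with h | h
    · exact absurd h hts
    · exact h
  nlinarith [mul_pos (mul_pos hH ha) hb, mul_pos ha hb, c1, c2, hk]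
end

section
/- Closed-form coordinate update under a normal prior: let H ≥ 0, σ > 0, δ > 0, and g, θ, μ ∈ ℝ. Define B(t) = g(t − θ) + (H/2)(t − θ)² + (t − μ)²/(2σ²) and Δ = (g + (θ − μ)/σ²)/(H + 1/σ²). Then the unique minimizer of B over the trust region [θ − δ, θ + δ] is t* = θ − sgn(Δ)·min{|Δ|, δ} (with t* = θ when Δ = 0). -/
open Real

lemma quad_clamp_min (δ : ℝ) (hδ : 0 < δ) (θ Δ : ℝ) :
    (θ - Real.sign Δ * min |Δ| δ) ∈ Set.Icc (θ - δ) (θ + δ) ∧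
    (∀ t ∈ Set.Icc (θ - δ) (θ + δ),
      ((θ - Real.sign Δ * min |Δ| δ) - θ + Δ) ^ 2 ≤ (t - θ + Δ) ^ 2) ∧
    (∀ t ∈ Set.Icc (θ - δ) (θ + δ),
      (t - θ + Δ) ^ 2 = ((θ - Real.sign Δ * min |Δ| δ) - θ + Δ) ^ 2 →
      t = θ - Real.sign Δ * min |Δ| δ) := by
  rcases lt_trichotomy Δ 0 with hΔ | hΔ | hΔ
  · rw [Real.sign_of_neg hΔ, abs_of_neg hΔ]
    rcases le_or_gt (-Δ) δ with h | h
    · rw [min_eq_left h]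
      refine ⟨⟨by linarith, by linarith⟩, ?_, ?_⟩
      · intro t ht
        have : (θ - -1 * -Δ) - θ + Δ = 0 := by ring
        rw [this]; simpa using sq_nonneg _
      · intro t ht heq
        have h0 : (θ - -1 * -Δ) - θ + Δ = 0 := by ring
        rw [h0] at heq
        have := pow_eq_zero_iff (n := 2) (by norm_num) |>.mp (by linarith [heq] : (t - θ + Δ)^2 = 0)
        linarith
    · rw [min_eq_right h.le]
      refine ⟨⟨by linarith, by linarith⟩, ?_, ?_⟩
      · intro t ht
        obtain ⟨h1, h2⟩ := ht
        nlinarith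
      · intro t ht heq
        obtain ⟨h1, h2⟩ := ht
        have hle : t ≤ θ - -1 * δ := by nlinarith
        have hge : θ - -1 * δ ≤ t := by nlinarith
        linarith
  · subst hΔ
    simp only [Real.sign_zero, zero_mul, sub_zero, add_zero]
    refine ⟨⟨by linarith, by linarith⟩, ?_, ?_⟩
    · intro t ht
      have : θ - θ = (0:ℝ) := by ring
      rw [this]; simpa using sq_nonneg _
    · intro t ht heq
      have h0 : (θ - θ : ℝ) = 0 := by ring
      rw [h0] at heq
      have := pow_eq_zero_iff (n := 2) (by norm_num) |>.mp (by linarith [heq] : (t - θ)^2 = 0)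
      linarith
  · rw [Real.sign_of_pos hΔ, abs_of_pos hΔ]
    rcases le_or_gt Δ δ with h | h
    · rw [min_eq_left h]
      refine ⟨⟨by linarith, by linarith⟩, ?_, ?_⟩
      · intro t ht
        have : (θ - 1 * Δ) - θ + Δ = 0 := by ring
        rw [this]; simpa using sq_nonneg _
      · intro t ht heq
        have h0 : (θ - 1 * Δ) - θ + Δ = 0 := by ring
        rw [h0] at heq
        have := pow_eq_zero_iff (n := 2) (by norm_num) |>.mp (by linarith [heq] : (t - θ + Δ)^2 = 0)
        linarith
    · rw [min_eq_right h.le]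
      refine ⟨⟨by linarith, by linarith⟩, ?_, ?_⟩
      · intro t ht
        obtain ⟨h1, h2⟩ := ht
        nlinarith
      · intro t ht heq
        obtain ⟨h1, h2⟩ := ht
        have hle : t ≤ θ - 1 * δ := by nlinarith
        have hge : θ - 1 * δ ≤ t := by nlinarith
        linarith

/-- Closed-form coordinate update under a normal prior: the quadratic bound plus normal
negative log prior `B(t) = g(t−θ) + (H/2)(t−θ)² + (t−μ)²/(2σ²)` is uniquely minimized
over the trust region `[θ−δ, θ+δ]` at `t* = θ − sgn(Δ)·min{|Δ|, δ}`, where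
`Δ = (g + (θ−μ)/σ²)/(H + 1/σ²)` (with `t* = θ` when `Δ = 0`). -/
theorem normal_prior_coordinate_update
    (H σ δ : ℝ) (hH : 0 ≤ H) (hσ : 0 < σ) (hδ : 0 < δ) (g θ μ : ℝ) :
    let B : ℝ → ℝ := fun t => g * (t - θ) + H / 2 * (t - θ) ^ 2
      + (t - μ) ^ 2 / (2 * σ ^ 2)
    let Δ : ℝ := (g + (θ - μ) / σ ^ 2) / (H + 1 / σ ^ 2)
    let tstar : ℝ := θ - Real.sign Δ * min |Δ| δ
    tstar ∈ Set.Icc (θ - δ) (θ + δ) ∧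
    (∀ t ∈ Set.Icc (θ - δ) (θ + δ), B tstar ≤ B t) ∧
    (∀ t ∈ Set.Icc (θ - δ) (θ + δ), B t = B tstar → t = tstar) := by
  intro B Δ tstar
  have hσ2 : (0:ℝ) < σ ^ 2 := by positivity
  have hK : (0:ℝ) < H + 1 / σ ^ 2 := by positivity
  have hKΔ : (H + 1 / σ ^ 2) * Δ = g + (θ - μ) / σ ^ 2 := by
    show (H + 1 / σ ^ 2) * ((g + (θ - μ) / σ ^ 2) / (H + 1 / σ ^ 2)) = _
    field_simp
  have hident : ∀ t, B t = (H + 1 / σ ^ 2) / 2 * (t - θ + Δ) ^ 2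
      - (H + 1 / σ ^ 2) / 2 * Δ ^ 2 + (θ - μ) ^ 2 / (2 * σ ^ 2) := by
    intro t
    have h1 : (H + 1 / σ ^ 2) / 2 * (t - θ + Δ) ^ 2 - (H + 1 / σ ^ 2) / 2 * Δ ^ 2
        = (H + 1 / σ ^ 2) / 2 * (t - θ) ^ 2 + ((H + 1 / σ ^ 2) * Δ) * (t - θ) := by
      ring
    rw [h1, hKΔ]
    show g * (t - θ) + H / 2 * (t - θ) ^ 2 + (t - μ) ^ 2 / (2 * σ ^ 2) = _
    field_simp
    ring
  obtain ⟨hmem, hmin, huniq⟩ := quad_clamp_min δ hδ θ Δ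
  refine ⟨hmem, ?_, ?_⟩
  · intro t ht
    have hq := hmin t ht
    rw [hident t, hident tstar]
    have := mul_le_mul_of_nonneg_left hq (le_of_lt (by positivity : (0:ℝ) < (H + 1/σ^2)/2))
    linarith
  · intro t ht heq
    apply huniq t ht
    rw [hident t, hident tstar] at heq
    have h2 : (H + 1 / σ ^ 2) / 2 * (t - θ + Δ) ^ 2 = (H + 1 / σ ^ 2) / 2 * (tstar - θ + Δ) ^ 2 := by
      linarith
    exact mul_left_cancel₀ (by positivity) h2
end

section
/- The Gentzkow–Shapiro slant index is first-order partial least squares (Appendix A.1): let n ≥ 1, y ∈ ℝ^n with Σ_i (y_i − ȳ)² > 0, and f_{ij} ∈ ℝ for i = 1,…,n, j = 1,…,p. For each j, let (a_j, b_j) be the minimizer over (a, b) ∈ ℝ² of Σ_{i=1}^n (f_{ij} − a − b·y_i)². Then b_j = Σ_i (y_i − ȳ)(f_{ij} − f̄_j) / Σ_i (y_i − ȳ)² for every j; and if Σ_{j=1}^p b_j² > 0, then there exist constants A ∈ ℝ and B > 0 such that the slant index z_i = Σ_{j=1}^p b_j (f_{ij} − a_j) / Σ_{j=1}^p b_j²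 satisfies z_i = A + B·Σ_{j=1}^p ĉ_j f_{ij} for every i, where ĉ_j = (1/n)Σ_i (y_i − ȳ)(f_{ij} − f̄_j) is the sample covariance of the j-th frequency with y. Hence slant is, up to a uniform shift and positive scaling, the projection of frequencies onto their covariances with y (the first PLS direction). -/
/-!
The first-order conditions of the `j`-th regression say that its residuals are orthogonal to
`1` and to `y`; hence `b_j · Σ_i (y_i - ȳ)² = Σ_i (y_i - ȳ)(f_ij - f̄_j) = n ĉ_j`. So the slope
vector `b` is the positive multiple `n / Σ_i (y_i - ȳ)²` of the covariance vector `ĉ`, and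
`z_i = Σ_j b_j f_ij / Σ_j b_j² - Σ_j b_j a_j / Σ_j b_j²` is an increasing affine function of
`Σ_j ĉ_j f_ij`.
-/

open Finset

section LeastSquares

variable {ι : Type*} [Fintype ι]

theorem sum_mul_eq_zero_of_forall_sum_sq_le {r v : ι → ℝ}
    (hmin : ∀ t : ℝ, ∑ i, r i ^ 2 ≤ ∑ i, (r i - t * v i) ^ 2) : ∑ i, r i * v i = 0 := by
  have hlocal : IsLocalMin (fun t : ℝ => ∑ i, (r i - t * v i) ^ 2) 0 :=
    Filter.Eventually.of_forall fun t => by simpa using hmin t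
  have hderiv : HasDerivAt (fun t : ℝ => ∑ i, (r i - t * v i) ^ 2)
      (-2 * ∑ i, r i * v i) 0 :=
    (HasDerivAt.fun_sum fun i _ =>
      (((hasDerivAt_id 0).mul_const (v i)).const_sub (r i)).pow 2).congr_deriv
      (by rw [mul_sum]; exact sum_congr rfl fun i _ => by norm_num; ring)
  simpa using hlocal.hasDerivAt_eq_zero hderiv

theorem sum_sub_mean_eq_zero (y : ι → ℝ) :
    ∑ i, (y i - (∑ k, y k) / Fintype.card ι) = 0 := by
  rcases isEmpty_or_nonempty ι with hι | hι
  · simp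
  · rw [sum_sub_distrib, sum_const, card_univ, nsmul_eq_mul,
      mul_div_cancel₀ _ (by positivity), sub_self]

theorem sum_centered_mul_centered (y g : ι → ℝ) :
    ∑ i, (y i - (∑ k, y k) / Fintype.card ι) * (g i - (∑ k, g k) / Fintype.card ι)
      = ∑ i, (y i - (∑ k, y k) / Fintype.card ι) * g i := by
  rw [← sub_eq_zero, ← sum_sub_distrib]
  simp only [← mul_sub, sub_sub_cancel_left, mul_neg, sum_neg_distrib, ← sum_mul,
    sum_sub_mean_eq_zero, zero_mul, neg_zero]

theorem ols_slope_mul_sum_sq_centered (y g : ι → ℝ) {a b : ℝ}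
    (hmin : ∀ a' b' : ℝ, ∑ i, (g i - (a + b * y i)) ^ 2 ≤ ∑ i, (g i - (a' + b' * y i)) ^ 2) :
    b * ∑ i, (y i - (∑ k, y k) / Fintype.card ι) ^ 2
      = ∑ i, (y i - (∑ k, y k) / Fintype.card ι) * (g i - (∑ k, g k) / Fintype.card ι) := by
  set ym := (∑ k, y k) / Fintype.card ι
  set r : ι → ℝ := fun i => g i - (a + b * y i) with hr
  have horth_one : ∑ i, r i * 1 = 0 :=
    sum_mul_eq_zero_of_forall_sum_sq_le fun t =>
      (hmin (a + t) b).trans_eq (sum_congr rfl fun i _ => by rw [hr]; ring)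
  have horth_y : ∑ i, r i * y i = 0 :=
    sum_mul_eq_zero_of_forall_sum_sq_le fun t =>
      (hmin a (b + t)).trans_eq (sum_congr rfl fun i _ => by rw [hr]; ring)
  have horth_centered : ∑ i, (y i - ym) * r i = 0 := by
    simp only [mul_one] at horth_one
    simp only [sub_mul, sum_sub_distrib, ← mul_sum, mul_comm (y _), horth_one, horth_y,
      mul_zero, sub_zero]
  calc b * ∑ i, (y i - ym) ^ 2 = b * ∑ i, (y i - ym) * y i := by
        simp only [sq]; exact congrArg (b * ·) (sum_centered_mul_centered y y)
    _ = ∑ i, ((y i - ym) * r i + a * (y i - ym) + b * ((y i - ym) * y i)) := by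
        rw [sum_add_distrib, sum_add_distrib, ← mul_sum, ← mul_sum, horth_centered,
          sum_sub_mean_eq_zero]
        ring
    _ = ∑ i, (y i - ym) * g i := sum_congr rfl fun i _ => by rw [hr]; ring
    _ = _ := (sum_centered_mul_centered y g).symm

end LeastSquares

theorem exists_affine_of_weights_eq_mul {ι κ : Type*} [Fintype κ] {b c a : κ → ℝ} {s S : ℝ}
    (hs : 0 < s) (hS : 0 < S) (hb : ∀ j, b j = s * c j) (x : ι → κ → ℝ) :
    ∃ A B : ℝ, 0 < B ∧ ∀ i, (∑ j, b j * (x i j - a j)) / S = A + B * ∑ j, c j * x i j := by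
  refine ⟨-(∑ j, b j * a j) / S, s / S, div_pos hs hS, fun i => ?_⟩
  simp only [mul_sub, sum_sub_distrib, hb, mul_assoc, ← mul_sum]
  field_simp
  ring

theorem slant_is_first_order_PLS_general
    (n p : ℕ)
    (y : Fin n → ℝ)
    (hy : 0 < ∑ i, (y i - (∑ i', y i') / n) ^ 2)
    (f : Fin n → Fin p → ℝ)
    (a b : Fin p → ℝ)
    (hab : ∀ j : Fin p, ∀ a' b' : ℝ,
      ∑ i, (f i j - (a j + b j * y i)) ^ 2 ≤ ∑ i, (f i j - (a' + b' * y i)) ^ 2) :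
    (∀ j : Fin p,
      b j = (∑ i, (y i - (∑ i', y i') / n) * (f i j - (∑ i', f i' j) / n))
              / ∑ i, (y i - (∑ i', y i') / n) ^ 2) ∧
    (0 < ∑ j, b j ^ 2 →
      ∃ A B : ℝ, 0 < B ∧ ∀ i : Fin n,
        (∑ j, b j * (f i j - a j)) / ∑ j, b j ^ 2
          = A + B * ∑ j,
              ((1 / n) * ∑ i', (y i' - (∑ i'', y i'') / n)
                  * (f i' j - (∑ i'', f i'' j) / n)) * f i j) := by
  have hn : (0 : ℝ) < n := by
    rcases Nat.eq_zero_or_pos n with rfl | hn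
    · simp at hy
    · exact_mod_cast hn
  have hslope : ∀ j : Fin p,
      b j = (∑ i, (y i - (∑ i', y i') / n) * (f i j - (∑ i', f i' j) / n))
              / ∑ i, (y i - (∑ i', y i') / n) ^ 2 := fun j => by
    have := ols_slope_mul_sum_sq_centered y (fun i => f i j) (hab j)
    simp only [Fintype.card_fin] at this
    exact eq_div_of_mul_eq hy.ne' this
  refine ⟨hslope, fun hS => exists_affine_of_weights_eq_mul (div_pos hn hy) hS (fun j => ?_) f⟩
  rw [hslope j, one_div, ← mul_assoc, div_mul_eq_mul_div, mul_inv_cancel₀ hn.ne',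
    one_div_mul_eq_div]

/-- The Gentzkow–Shapiro slant index is first-order partial least squares
(Appendix A.1): the OLS slopes satisfy `b_j = Σ_i (y_i − ȳ)(f_{ij} − f̄_j) / Σ_i (y_i − ȳ)²`,
and (when `Σ_j b_j² > 0`) the slant index `z_i = Σ_j b_j(f_{ij} − a_j)/Σ_j b_j²` equals,
up to a uniform shift `A` and positive scaling `B`, the projection
`Σ_j ĉ_j f_{ij}` of frequencies onto their sample covariances with `y`. -/
theorem slant_is_first_order_PLS
    (n p : ℕ) (hn : 1 ≤ n)
    (y : Fin n → ℝ)
    (hy : 0 < ∑ i, (y i - (∑ i', y i') / n) ^ 2)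
    (f : Fin n → Fin p → ℝ)
    (a b : Fin p → ℝ)
    (hab : ∀ j : Fin p, ∀ a' b' : ℝ,
      ∑ i, (f i j - (a j + b j * y i)) ^ 2 ≤ ∑ i, (f i j - (a' + b' * y i)) ^ 2) :
    (∀ j : Fin p,
      b j = (∑ i, (y i - (∑ i', y i') / n) * (f i j - (∑ i', f i' j) / n))
              / ∑ i, (y i - (∑ i', y i') / n) ^ 2) ∧
    (0 < ∑ j, b j ^ 2 →
      ∃ A B : ℝ, 0 < B ∧ ∀ i : Fin n,
        (∑ j, b j * (f i j - a j)) / ∑ j, b j ^ 2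
          = A + B * ∑ j,
              ((1 / n) * ∑ i', (y i' - (∑ i'', y i'') / n)
                  * (f i' j - (∑ i'', f i'' j) / n)) * f i j) :=
  slant_is_first_order_PLS_general n p y hy f a b hab
end
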